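/- For all σ > 0, ρ with -1 < ρ < 1, and a ∈ ℝ: ∫_ℝ e^u · (∫_{-∞}^{-a} f(u,v;σ,ρ) dv) du = exp(σ^2/2) · (1 - Φ(a + σρ)). -/

import Mathlib

open Real MeasureTheory

/-- The density of the centered bivariate normal distribution with
`Var(U) = σ²`, `Var(V) = 1` and `Cov(U,V) = ρσ`. -/
noncomputable def biNormDensity (σ ρ u v : ℝ) : ℝ :=
  (2 * π * σ * Real.sqrt (1 - ρ ^ 2))⁻¹ *
    Real.exp (-(u ^ 2 / σ ^ 2 - 2 * ρ * u * v / σ + v ^ 2) / (2 * (1 - ρ ^ 2)))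

/-- The standard normal cumulative distribution function `Φ`. -/
noncomputable def stdNormalCDF (x : ℝ) : ℝ :=
  ∫ t in Set.Iic x, (Real.sqrt (2 * π))⁻¹ * Real.exp (-t ^ 2 / 2)

lemma phiDens_integrable :
    Integrable (fun t : ℝ => (Real.sqrt (2 * π))⁻¹ * Real.exp (-t ^ 2 / 2)) := by
  have h : ∀ t : ℝ, (-t ^ 2 / 2 : ℝ) = -(1/2 : ℝ) * t ^ 2 := fun t => by ring
  simp_rw [h]
  exact (integrable_exp_neg_mul_sq (by norm_num)).const_mul _

lemma phiDens_total :
    ∫ t : ℝ, (Real.sqrt (2 * π))⁻¹ * Real.exp (-t ^ 2 / 2) = 1 := by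
  have h : ∀ t : ℝ, (-t ^ 2 / 2 : ℝ) = -(1/2 : ℝ) * t ^ 2 := fun t => by ring
  simp_rw [h]
  rw [integral_const_mul, integral_gaussian, show (π / (1/2 : ℝ)) = 2 * π by ring]
  exact inv_mul_cancel₀ (Real.sqrt_ne_zero'.mpr (by positivity))

lemma stdNormalCDF_neg (x : ℝ) : stdNormalCDF (-x) = 1 - stdNormalCDF x := by
  have hInt := phiDens_integrable
  have hIci : stdNormalCDF (-x)
      = ∫ t in Set.Ici x, (Real.sqrt (2 * π))⁻¹ * Real.exp (-t ^ 2 / 2) := by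
    unfold stdNormalCDF
    rw [← integral_indicator measurableSet_Iic, ← integral_indicator measurableSet_Ici,
      ← integral_neg_eq_self]
    congr 1
    funext t
    by_cases ht : x ≤ t
    · rw [Set.indicator_of_mem (by simpa using ht),
        Set.indicator_of_mem (by simpa using ht)]
      ring_nf
    · rw [Set.indicator_of_notMem (by simpa using ht),
        Set.indicator_of_notMem (by simpa using ht)]
  have hsplit : stdNormalCDF x
      + (∫ t in Set.Ici x, (Real.sqrt (2 * π))⁻¹ * Real.exp (-t ^ 2 / 2)) = 1 := by
    unfold stdNormalCDF
    rw [setIntegral_congr_set Iio_ae_eq_Iic.symm,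
      intervalIntegral.integral_Iio_add_Ici hInt.integrableOn hInt.integrableOn, phiDens_total]
  rw [hIci]; linarith

/-- `∫_ℝ e^u (∫_{-∞}^{-a} f(u,v;σ,ρ) dv) du = exp(σ²/2)(1 - Φ(a + σρ))`:
the untreated-subject (`w = 0`) factor of the observed likelihood (equation (6)),
integrated against `e^u`. -/
theorem integral_exp_biNormDensity_lower (σ ρ a : ℝ) (hσ : 0 < σ)
    (hρ₁ : -1 < ρ) (hρ₂ : ρ < 1) :
    ∫ u : ℝ, Real.exp u * ∫ v in Set.Iic (-a), biNormDensity σ ρ u v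
      = Real.exp (σ ^ 2 / 2) * (1 - stdNormalCDF (a + σ * ρ)) := by
  have hρ : (0 : ℝ) < 1 - ρ ^ 2 := by nlinarith
  have hsq : (0 : ℝ) < Real.sqrt (1 - ρ ^ 2) := Real.sqrt_pos.mpr hρ
  have hc : (0 : ℝ) < (2 * π * σ * Real.sqrt (1 - ρ ^ 2))⁻¹ := by
    have := Real.pi_pos; positivity
  set c : ℝ := (2 * π * σ * Real.sqrt (1 - ρ ^ 2))⁻¹ with hcdef
  set b : ℝ := 1 / (2 * σ ^ 2 * (1 - ρ ^ 2)) with hbdef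
  have hb : 0 < b := by positivity
  -- pointwise rewriting of the integrand
  have hpt : ∀ u v : ℝ, Real.exp u * biNormDensity σ ρ u v
      = c * (Real.exp (σ ^ 2 / 2 - (v - σ * ρ) ^ 2 / 2)
          * Real.exp (-b * (u - (σ * ρ * v + σ ^ 2 * (1 - ρ ^ 2))) ^ 2)) := by
    intro u v
    unfold biNormDensity
    rw [← hcdef, ← Real.exp_add, mul_comm (Real.exp u), mul_assoc, ← Real.exp_add]
    congr 1
    rw [hbdef]
    field_simp
    ring
  -- inner integral in u
  have hinner : ∀ v : ℝ, (∫ u : ℝ, Real.exp u * biNormDensity σ ρ u v)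
      = (Real.sqrt (2 * π))⁻¹ * Real.exp (σ ^ 2 / 2 - (v - σ * ρ) ^ 2 / 2) := by
    intro v
    simp_rw [hpt]
    rw [integral_const_mul, integral_const_mul,
      integral_sub_right_eq_self (fun w : ℝ => Real.exp (-b * w ^ 2))
        (σ * ρ * v + σ ^ 2 * (1 - ρ ^ 2)) (μ := volume),
      integral_gaussian]
    have hpib : π / b = 2 * π * (σ ^ 2 * (1 - ρ ^ 2)) := by
      rw [hbdef]; field_simp
    rw [hpib,
      Real.sqrt_mul (by positivity : (0:ℝ) ≤ 2 * π) (σ ^ 2 * (1 - ρ ^ 2)),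
      Real.sqrt_mul (by positivity : (0:ℝ) ≤ σ ^ 2) (1 - ρ ^ 2),
      Real.sqrt_sq hσ.le]
    have h2π : Real.sqrt (2 * π) * Real.sqrt (2 * π) = 2 * π :=
      Real.mul_self_sqrt (by positivity)
    have hne : Real.sqrt (2 * π) ≠ 0 := by positivity
    have hkey : c * (Real.sqrt (2 * π) * (σ * Real.sqrt (1 - ρ ^ 2)))
        = (Real.sqrt (2 * π))⁻¹ := by
      rw [hcdef, inv_mul_eq_div, ← one_div,
        div_eq_div_iff (by positivity) (by positivity : Real.sqrt (2 * π) ≠ 0)]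
      linear_combination (σ * Real.sqrt (1 - ρ ^ 2)) * h2π
    rw [← hkey]
    ring
  -- integrability on the product space
  have hFcont : Continuous (fun p : ℝ × ℝ => Real.exp p.1 * biNormDensity σ ρ p.1 p.2) := by
    unfold biNormDensity
    fun_prop
  have hFnonneg : ∀ p : ℝ × ℝ, 0 ≤ Real.exp p.1 * biNormDensity σ ρ p.1 p.2 := by
    intro p
    unfold biNormDensity
    positivity
  have hg : Integrable (fun u : ℝ => Real.exp (u - u ^ 2 / (4 * σ ^ 2))) := by
    have h0 : ∀ u : ℝ, u - u ^ 2 / (4 * σ ^ 2)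
        = σ ^ 2 + -(1 / (4 * σ ^ 2)) * (u - 2 * σ ^ 2) ^ 2 := by
      intro u; field_simp; ring
    simp_rw [h0, Real.exp_add]
    exact ((integrable_exp_neg_mul_sq (by positivity : (0:ℝ) < 1 / (4 * σ ^ 2))).comp_sub_right
      (2 * σ ^ 2)).const_mul _
  have hh : Integrable (fun v : ℝ => Real.exp (-(1/4 : ℝ) * v ^ 2)) :=
    integrable_exp_neg_mul_sq (by norm_num)
  have hbound : ∀ p : ℝ × ℝ, Real.exp p.1 * biNormDensity σ ρ p.1 p.2
      ≤ c * (Real.exp (p.1 - p.1 ^ 2 / (4 * σ ^ 2)) * Real.exp (-(1/4 : ℝ) * p.2 ^ 2)) := by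
    rintro ⟨u, v⟩
    unfold biNormDensity
    rw [← hcdef, mul_comm (Real.exp u), mul_assoc, ← Real.exp_add, ← Real.exp_add]
    refine mul_le_mul_of_nonneg_left (Real.exp_le_exp.mpr ?_) hc.le
    have hx : u ^ 2 / σ ^ 2 = (u / σ) ^ 2 := (div_pow u σ 2).symm
    have hxy : 2 * ρ * u * v / σ = 2 * ρ * (u / σ) * v := by ring
    have key : -(u ^ 2 / σ ^ 2 - 2 * ρ * u * v / σ + v ^ 2) / (2 * (1 - ρ ^ 2))
        ≤ -(u ^ 2 / σ ^ 2) / 4 - v ^ 2 / 4 := by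
      rw [div_le_iff₀ (by positivity : (0:ℝ) < 2 * (1 - ρ ^ 2)), hx, hxy]
      nlinarith [sq_nonneg (u / σ - ρ * v), sq_nonneg (ρ * (u / σ) - v)]
    have hx2 : -(u ^ 2 / σ ^ 2) / 4 = -(u ^ 2 / (4 * σ ^ 2)) := by ring
    linarith [key, hx2.le]
  have hF : Integrable (fun p : ℝ × ℝ => Real.exp p.1 * biNormDensity σ ρ p.1 p.2)
      (volume.prod volume) := by
    refine Integrable.mono' ((hg.mul_prod hh).const_mul c) hFcont.aestronglyMeasurable
      (ae_of_all _ fun p => ?_)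
    rw [Real.norm_eq_abs, abs_of_nonneg (hFnonneg p)]
    exact hbound p
  have hF' : Integrable (Function.uncurry fun u v : ℝ => Real.exp u * biNormDensity σ ρ u v)
      (volume.prod (volume.restrict (Set.Iic (-a)))) := by
    have hmeq : (volume : Measure ℝ).prod ((volume : Measure ℝ).restrict (Set.Iic (-a)))
        = ((volume : Measure ℝ).prod (volume : Measure ℝ)).restrict
            (Set.univ ×ˢ Set.Iic (-a)) := by
      rw [← Measure.prod_restrict (μ := (volume : Measure ℝ)) (ν := (volume : Measure ℝ))
        Set.univ (Set.Iic (-a)), Measure.restrict_univ]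
    show Integrable (fun p : ℝ × ℝ => Real.exp p.1 * biNormDensity σ ρ p.1 p.2)
      (volume.prod (volume.restrict (Set.Iic (-a))))
    rw [hmeq]
    exact hF.restrict
  calc
    ∫ u : ℝ, Real.exp u * ∫ v in Set.Iic (-a), biNormDensity σ ρ u v
        = ∫ u : ℝ, ∫ v in Set.Iic (-a), Real.exp u * biNormDensity σ ρ u v := by
          simp_rw [integral_const_mul]
    _ = ∫ v in Set.Iic (-a), ∫ u : ℝ, Real.exp u * biNormDensity σ ρ u v :=
          integral_integral_swap hF'
    _ = ∫ v in Set.Iic (-a),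
          (Real.sqrt (2 * π))⁻¹ * Real.exp (σ ^ 2 / 2 - (v - σ * ρ) ^ 2 / 2) := by
          simp_rw [hinner]
    _ = Real.exp (σ ^ 2 / 2) * ∫ v in Set.Iic (-a),
          (Real.sqrt (2 * π))⁻¹ * Real.exp (-(v - σ * ρ) ^ 2 / 2) := by
          rw [← integral_const_mul]
          congr 1
          funext v
          rw [sub_eq_add_neg, Real.exp_add, ← neg_div]
          ring
    _ = Real.exp (σ ^ 2 / 2) * stdNormalCDF (-(a + σ * ρ)) := by
          congr 1
          unfold stdNormalCDF
          rw [← integral_indicator measurableSet_Iic, ← integral_indicator measurableSet_Iic,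
            ← integral_sub_right_eq_self
              (fun t : ℝ => Set.indicator (Set.Iic (-(a + σ * ρ)))
                (fun t : ℝ => (Real.sqrt (2 * π))⁻¹ * Real.exp (-t ^ 2 / 2)) t)
              (σ * ρ) (μ := volume)]
          congr 1
          funext v
          by_cases hv : v ≤ -a
          · rw [Set.indicator_of_mem (by simpa using hv),
              Set.indicator_of_mem (by simp only [Set.mem_Iic]; linarith)]
          · rw [Set.indicator_of_notMem (by simpa using hv),
              Set.indicator_of_notMem (fun h => hv (by
                simp only [Set.mem_Iic] at h; linarith))]
    _ = Real.exp (σ ^ 2 / 2) * (1 - stdNormalCDF (a + σ * ρ)) := by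
          rw [stdNormalCDF_neg]
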